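/- arXiv:1309.7657 — 6 statements merged into one kernel-verified Lean document; each statement's English description precedes it below -/
import Mathlib

section
/- Let f_n : ℝ^m → [0,∞) be defined by f_n(x) = ‖A x‖^{2n} for A ∈ ℝ^{d×m} and n ∈ ℕ. Then f_n is twice differentiable and for all x ∈ ℝ^m, trace(Hess f_n(x)) ≤ 2n(2n−1) · ‖A‖_{HS}² · ‖A x‖^{2n−2}. -/
/-!
Write `g x = ‖A x‖² = ∑ᵢ ((A x)ᵢ)²`, so that `f_n = gⁿ`. By the chain rule the second derivative
of `gⁿ` along `e_k` is `n gⁿ⁻¹ ∂ₖ²g + n (n - 1) gⁿ⁻² (∂ₖg)²`, where `∂ₖ²g = 2 ∑ᵢ A_{ik}²` and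
`∂ₖg = 2 (Aᵀ A x)_k`. Summing over `k`, the first terms give `2n ‖A‖²_HS gⁿ⁻¹`, and by
Cauchy–Schwarz `‖Aᵀ (A x)‖² ≤ ‖A‖²_HS ‖A x‖²`, so the second ones contribute at most
`4n(n - 1) ‖A‖²_HS gⁿ⁻¹`; together this is `2n(2n - 1) ‖A‖²_HS gⁿ⁻¹`.
-/

open Finset

section PowSecondDeriv

variable {E : Type*} [NormedAddCommGroup E] [NormedSpace ℝ E] {h : E → ℝ}

theorem fderiv_pow_apply {y : E} (hh : DifferentiableAt ℝ h y) (n : ℕ) (v : E) :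
    fderiv ℝ (fun z => h z ^ n) y v = n * h y ^ (n - 1) * fderiv ℝ h y v := by
  simp [fderiv_fun_pow n hh, mul_assoc]

theorem fderiv_fderiv_pow_apply {x : E} (v w : E) (hh : Differentiable ℝ h)
    (hh' : DifferentiableAt ℝ (fun y => fderiv ℝ h y v) x) (n : ℕ) :
    fderiv ℝ (fun y => fderiv ℝ (fun z => h z ^ n) y v) x w =
      n * h x ^ (n - 1) * fderiv ℝ (fun y => fderiv ℝ h y v) x w
        + n * (n - 1) * h x ^ (n - 2) * (fderiv ℝ h x v * fderiv ℝ h x w) := by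
  simp_rw [fderiv_pow_apply (hh _)]
  rw [(((hh x).hasFDerivAt.pow (n - 1)).const_mul (n : ℝ) |>.fun_mul hh'.hasFDerivAt).fderiv]
  have hcast : (n : ℝ) * ((n - 1 : ℕ) : ℝ) = n * (n - 1) := by
    rcases n with _ | n <;> simp
  simp only [add_apply, smul_apply, smul_eq_mul, nsmul_eq_mul, Nat.sub_sub]
  linear_combination (h x ^ (n - 2) * fderiv ℝ h x v * fderiv ℝ h x w) * hcast

end PowSecondDeriv

section SumSq

variable {E ι : Type*} [NormedAddCommGroup E] [NormedSpace ℝ E] [Fintype ι]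
  (ℓ : ι → E →L[ℝ] ℝ)

theorem hasFDerivAt_sum_sq (y : E) :
    HasFDerivAt (fun x => ∑ i, ℓ i x ^ 2) (∑ i, (2 * ℓ i y) • ℓ i) y := by
  refine HasFDerivAt.fun_sum fun i _ => ?_
  simpa using (ℓ i).hasFDerivAt.pow 2

theorem contDiff_sum_sq : ContDiff ℝ ⊤ (fun x => ∑ i, ℓ i x ^ 2) := by
  fun_prop

theorem fderiv_sum_sq_apply (y v : E) :
    fderiv ℝ (fun x => ∑ i, ℓ i x ^ 2) y v = 2 * ∑ i, ℓ i y * ℓ i v := by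
  simp [(hasFDerivAt_sum_sq ℓ y).fderiv, mul_sum, mul_assoc]

theorem fderiv_sum_sq_apply_eq_clm (v : E) :
    (fun y => fderiv ℝ (fun x => ∑ i, ℓ i x ^ 2) y v) = ⇑((2 : ℝ) • ∑ i, ℓ i v • ℓ i) := by
  ext y
  simp [fderiv_sum_sq_apply, mul_comm]

theorem fderiv_fderiv_sum_sq_apply (x v w : E) :
    fderiv ℝ (fun y => fderiv ℝ (fun x => ∑ i, ℓ i x ^ 2) y v) x w = 2 * ∑ i, ℓ i v * ℓ i w := by
  rw [fderiv_sum_sq_apply_eq_clm, ContinuousLinearMap.fderiv]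
  simp [mul_sum]

end SumSq

theorem Real.sqrt_pow_two_mul {a : ℝ} (ha : 0 ≤ a) (n : ℕ) : √a ^ (2 * n) = a ^ n := by
  rw [pow_mul, Real.sq_sqrt ha]

theorem natCast_mul_sub_one_mul_pow_sub_two_mul_le {a b c : ℝ} (ha : 0 ≤ a) (hb : b ≤ a * c)
    (n : ℕ) : n * (n - 1) * a ^ (n - 2) * b ≤ n * (n - 1) * a ^ (n - 1) * c := by
  rcases n with _ | _ | n
  · simp
  · simp
  · have hn : (0 : ℝ) ≤ ((n + 2 : ℕ) : ℝ) - 1 := by push_cast; linarith [n.cast_nonneg (α := ℝ)]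
    calc ((n + 2 : ℕ) : ℝ) * ((n + 2 : ℕ) - 1) * a ^ (n + 2 - 2) * b
        ≤ ((n + 2 : ℕ) : ℝ) * ((n + 2 : ℕ) - 1) * a ^ (n + 2 - 2) * (a * c) := by
          gcongr
      _ = ((n + 2 : ℕ) : ℝ) * ((n + 2 : ℕ) - 1) * a ^ (n + 2 - 1) * c := by
          rw [show n + 2 - 1 = n + 2 - 2 + 1 by omega, pow_succ]; ring

namespace Matrix

variable {ι κ : Type*} [Fintype κ]

noncomputable def rowCLM (A : Matrix ι κ ℝ) (i : ι) : (κ → ℝ) →L[ℝ] ℝ :=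
  LinearMap.toContinuousLinearMap ((LinearMap.proj i).comp A.mulVecLin)

@[simp]
theorem rowCLM_apply (A : Matrix ι κ ℝ) (i : ι) (x : κ → ℝ) : A.rowCLM i x = (A *ᵥ x) i := rfl

theorem fderiv_fderiv_sum_sq_mulVec_pow_single [Fintype ι] [DecidableEq κ] (A : Matrix ι κ ℝ)
    (n : ℕ) (x : κ → ℝ) (k : κ) :
    fderiv ℝ (fun y => fderiv ℝ (fun z => (∑ i, (A *ᵥ z) i ^ 2) ^ n) y (Pi.single k 1)) x
        (Pi.single k 1) =
      n * (∑ i, (A *ᵥ x) i ^ 2) ^ (n - 1) * (2 * ∑ i, A i k ^ 2)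
        + n * (n - 1) * (∑ i, (A *ᵥ x) i ^ 2) ^ (n - 2) * (2 * ((A *ᵥ x) ᵥ* A) k) ^ 2 := by
  have hdiff : DifferentiableAt ℝ
      (fun y => fderiv ℝ (fun z => ∑ i, A.rowCLM i z ^ 2) y (Pi.single k 1)) x := by
    rw [fderiv_sum_sq_apply_eq_clm]
    exact ContinuousLinearMap.differentiableAt _
  have := fderiv_fderiv_pow_apply (Pi.single k 1) (Pi.single k 1)
    ((contDiff_sum_sq A.rowCLM).differentiable (by simp)) hdiff n
  rw [fderiv_fderiv_sum_sq_apply, fderiv_sum_sq_apply] at this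
  simpa [mulVec_single_one, vecMul, dotProduct, sq] using this

theorem sum_vecMul_sq_le [Fintype ι] (y : ι → ℝ) (A : Matrix ι κ ℝ) :
    ∑ k, (y ᵥ* A) k ^ 2 ≤ (∑ i, y i ^ 2) * ∑ i, ∑ k, A i k ^ 2 :=
  calc ∑ k, (y ᵥ* A) k ^ 2 ≤ ∑ k, (∑ i, y i ^ 2) * ∑ i, A i k ^ 2 :=
        sum_le_sum fun k _ => sum_mul_sq_le_sq_mul_sq _ _ _
    _ = (∑ i, y i ^ 2) * ∑ i, ∑ k, A i k ^ 2 := by rw [← mul_sum, sum_comm]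

end Matrix

open Matrix

theorem trace_hessian_norm_pow_le_general
    (d m n : ℕ) (A : Matrix (Fin d) (Fin m) ℝ) :
    ContDiff ℝ 2 (fun x : Fin m → ℝ =>
      (Real.sqrt (∑ i, (A.mulVec x i) ^ 2)) ^ (2 * n)) ∧
    ∀ x : Fin m → ℝ,
      (∑ i : Fin m,
        fderiv ℝ (fun y =>
          fderiv ℝ (fun z : Fin m → ℝ =>
            (Real.sqrt (∑ i, (A.mulVec z i) ^ 2)) ^ (2 * n)) y (Pi.single i 1))
          x (Pi.single i 1))
      ≤ (2 * n) * (2 * n - 1) * (Real.sqrt (∑ i, ∑ j, (A i j) ^ 2)) ^ 2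
          * (Real.sqrt (∑ i, (A.mulVec x i) ^ 2)) ^ (2 * n - 2) := by
  simp only [Real.sqrt_pow_two_mul (sum_nonneg fun _ _ => sq_nonneg _)]
  refine ⟨(contDiff_sum_sq A.rowCLM).pow n |>.of_le le_top, fun x => ?_⟩
  set g := ∑ i, (A *ᵥ x) i ^ 2
  set H := ∑ i, ∑ j, A i j ^ 2
  have hg : 0 ≤ g := sum_nonneg fun _ _ => sq_nonneg _
  have hH : 0 ≤ H := sum_nonneg fun _ _ => sum_nonneg fun _ _ => sq_nonneg _
  have hCS := natCast_mul_sub_one_mul_pow_sub_two_mul_le hg (A.sum_vecMul_sq_le (A *ᵥ x)) n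
  rw [Real.sq_sqrt hH, show 2 * n - 2 = 2 * (n - 1) by omega, Real.sqrt_pow_two_mul hg]
  simp only [fderiv_fderiv_sum_sq_mulVec_pow_single, sum_add_distrib, ← mul_sum, mul_pow]
  rw [sum_comm]
  linear_combination 4 * hCS

/-- For `f_n(x) = ‖Ax‖^(2n)` with `n ≥ 1`, the map `f_n` is twice (continuously)
differentiable and `trace(Hess f_n(x)) ≤ 2n(2n−1) ‖A‖_HS² ‖Ax‖^(2n−2)` for all `x`. -/
theorem trace_hessian_norm_pow_le
    (d m n : ℕ) (hn : 1 ≤ n) (A : Matrix (Fin d) (Fin m) ℝ) :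
    ContDiff ℝ 2 (fun x : Fin m → ℝ =>
      (Real.sqrt (∑ i, (A.mulVec x i) ^ 2)) ^ (2 * n)) ∧
    ∀ x : Fin m → ℝ,
      (∑ i : Fin m,
        fderiv ℝ (fun y =>
          fderiv ℝ (fun z : Fin m → ℝ =>
            (Real.sqrt (∑ i, (A.mulVec z i) ^ 2)) ^ (2 * n)) y (Pi.single i 1))
          x (Pi.single i 1))
      ≤ (2 * n) * (2 * n - 1) * (Real.sqrt (∑ i, ∑ j, (A i j) ^ 2)) ^ 2
          * (Real.sqrt (∑ i, (A.mulVec x i) ^ 2)) ^ (2 * n - 2) :=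
  trace_hessian_norm_pow_le_general d m n A
end

section
/- Let (Ω,F,ℙ) be a probability space, (E,𝓔) a measurable space, V : E → [0,∞] measurable, Z : ℕ₀ × Ω → E a stochastic process, γ_n ∈ [0,∞), δ_n ∈ (0,∞], and Ω_n ∈ F satisfy Ω_0 = Ω, Ω_n \ Ω_{n+1} ⊆ {V(Z_n) > δ_n}, and E[1_{Ω_{n+1}} V(Z_{n+1})] ≤ γ_n · E[1_{Ω_n} V(Z_n)] for all n ∈ ℕ₀. Then for all n ∈ ℕ₀: (i) E[1_{Ω_n} V(Z_n)] ≤ (∏_{k=0}^{n−1} γ_k) · E[V(Z_0)], and (ii) ℙ[(Ω_n)^c] ≤ (∑_{k=0}^{n−1} (∏_{l=0}^{k−1} γ_l)/δ_k) · E[V(Z_0)]. -/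
/-!
Write `a n = E[1_{Ω_n} V(Z_n)]`. Iterating the contraction `a (n+1) ≤ γ n * a n` gives (i).
For (ii), `(Ω_n)ᶜ` is covered by the exit sets `Ω_k \ Ω_{k+1}`, `k < n`, and on the `k`-th of
them `1_{Ω_k} V(Z_k) > δ_k`, so Markov's inequality bounds its probability by `a k / δ k`.
-/

open MeasureTheory ENNReal NNReal

theorem le_prod_mul_of_le_mul {R : Type*} [CommMonoid R] [Preorder R] [MulLeftMono R]
    {a c : ℕ → R} (h : ∀ n, a (n + 1) ≤ c n * a n) (n : ℕ) :
    a n ≤ (∏ k ∈ Finset.range n, c k) * a 0 := by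
  induction n with
  | zero => simp
  | succ n ih =>
    calc a (n + 1) ≤ c n * a n := h n
      _ ≤ c n * ((∏ k ∈ Finset.range n, c k) * a 0) := mul_le_mul_right ih _
      _ = (∏ k ∈ Finset.range (n + 1), c k) * a 0 := by
        rw [Finset.prod_range_succ, mul_comm _ (c n), mul_assoc]

section Measure

variable {α : Type*} [MeasurableSpace α] (μ : Measure α)

theorem measure_compl_le_add_sum_measure_diff (S : ℕ → Set α) (n : ℕ) :
    μ (S n)ᶜ ≤ μ (S 0)ᶜ + ∑ k ∈ Finset.range n, μ (S k \ S (k + 1)) := by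
  induction n with
  | zero => simp
  | succ n ih =>
    have hcover : (S (n + 1))ᶜ ⊆ (S n)ᶜ ∪ (S n \ S (n + 1)) := fun ω hω => by
      by_cases h : ω ∈ S n
      · exact Or.inr ⟨h, hω⟩
      · exact Or.inl h
    calc μ (S (n + 1))ᶜ ≤ μ (S n)ᶜ + μ (S n \ S (n + 1)) :=
          (measure_mono hcover).trans (measure_union_le _ _)
      _ ≤ _ := by
        rw [Finset.sum_range_succ, ← add_assoc]
        gcongr

theorem measure_le_lintegral_div_of_lt {f : α → ℝ≥0∞} {s : Set α} {c : ℝ≥0∞}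
    (hs : MeasurableSet s) (hc : c ≠ 0) (hlt : ∀ x ∈ s, c < f x) :
    μ s ≤ (∫⁻ x, f x ∂μ) / c := by
  rcases eq_or_ne c ∞ with rfl | hc_top
  · have : s = ∅ := Set.eq_empty_of_forall_notMem fun x hx => not_top_lt (hlt x hx)
    simp [this]
  rw [ENNReal.le_div_iff_mul_le (Or.inl hc) (Or.inl hc_top), mul_comm, ← setLIntegral_const]
  calc ∫⁻ _ in s, c ∂μ ≤ ∫⁻ x in s, f x ∂μ := setLIntegral_mono' hs fun x hx => (hlt x hx).le
    _ ≤ ∫⁻ x, f x ∂μ := setLIntegral_le_lintegral s f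

end Measure

theorem indicator_lyapunov_stability_general
    {Ω E : Type*} [MeasurableSpace Ω] [MeasurableSpace E]
    (μ : Measure Ω)
    (V : E → ℝ≥0∞)
    (Z : ℕ → Ω → E)
    (γ : ℕ → ℝ≥0) (δ : ℕ → ℝ≥0∞) (hδ : ∀ n, 0 < δ n)
    (S : ℕ → Set Ω) (hS : ∀ n, MeasurableSet (S n)) (hS0 : S 0 = Set.univ)
    (hdiff : ∀ n, S n \ S (n + 1) ⊆ {ω | δ n < V (Z n ω)})
    (hrec : ∀ n,
      ∫⁻ ω, (S (n + 1)).indicator (fun ω => V (Z (n + 1) ω)) ω ∂μ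
        ≤ (γ n : ℝ≥0∞) * ∫⁻ ω, (S n).indicator (fun ω => V (Z n ω)) ω ∂μ) :
    ∀ n : ℕ,
      (∫⁻ ω, (S n).indicator (fun ω => V (Z n ω)) ω ∂μ
        ≤ (∏ k ∈ Finset.range n, (γ k : ℝ≥0∞)) * ∫⁻ ω, V (Z 0 ω) ∂μ) ∧
      μ (S n)ᶜ
        ≤ (∑ k ∈ Finset.range n, (∏ l ∈ Finset.range k, (γ l : ℝ≥0∞)) / δ k)
            * ∫⁻ ω, V (Z 0 ω) ∂μ := by
  set a : ℕ → ℝ≥0∞ := fun n => ∫⁻ ω, (S n).indicator (fun ω => V (Z n ω)) ω ∂μ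
  have ha0 : a 0 = ∫⁻ ω, V (Z 0 ω) ∂μ := by simp [a, hS0]
  have hdecay (n : ℕ) : a n ≤ (∏ k ∈ Finset.range n, (γ k : ℝ≥0∞)) * a 0 :=
    le_prod_mul_of_le_mul hrec n
  have hexit (k : ℕ) : μ (S k \ S (k + 1)) ≤ a k / δ k :=
    measure_le_lintegral_div_of_lt μ ((hS k).diff (hS (k + 1))) (hδ k).ne' fun ω hω => by
      simpa [Set.indicator_of_mem hω.1] using hdiff k hω
  refine fun n => ⟨ha0 ▸ hdecay n, ?_⟩
  calc μ (S n)ᶜ ≤ ∑ k ∈ Finset.range n, μ (S k \ S (k + 1)) := by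
        simpa [hS0] using measure_compl_le_add_sum_measure_diff μ S n
    _ ≤ ∑ k ∈ Finset.range n, (∏ l ∈ Finset.range k, (γ l : ℝ≥0∞)) * a 0 / δ k :=
        Finset.sum_le_sum fun k _ => (hexit k).trans (ENNReal.div_le_div_right (hdecay k) _)
    _ = _ := by simp_rw [ENNReal.mul_div_right_comm, ← Finset.sum_mul, ha0]

/-- Stability estimate: if `Ω_0 = Ω`, `Ω_n \ Ω_{n+1} ⊆ {V(Z_n) > δ_n}` and
`E[1_{Ω_{n+1}} V(Z_{n+1})] ≤ γ_n E[1_{Ω_n} V(Z_n)]` for all `n`, then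
`E[1_{Ω_n} V(Z_n)] ≤ (∏_{k<n} γ_k) E[V(Z_0)]` and
`ℙ[(Ω_n)ᶜ] ≤ (∑_{k<n} (∏_{l<k} γ_l)/δ_k) E[V(Z_0)]`. -/
theorem indicator_lyapunov_stability
    {Ω E : Type*} [MeasurableSpace Ω] [MeasurableSpace E]
    (μ : Measure Ω) [IsProbabilityMeasure μ]
    (V : E → ℝ≥0∞) (hV : Measurable V)
    (Z : ℕ → Ω → E) (hZ : ∀ n, Measurable (Z n))
    (γ : ℕ → ℝ≥0) (δ : ℕ → ℝ≥0∞) (hδ : ∀ n, 0 < δ n)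
    (S : ℕ → Set Ω) (hS : ∀ n, MeasurableSet (S n)) (hS0 : S 0 = Set.univ)
    (hdiff : ∀ n, S n \ S (n + 1) ⊆ {ω | δ n < V (Z n ω)})
    (hrec : ∀ n,
      ∫⁻ ω, (S (n + 1)).indicator (fun ω => V (Z (n + 1) ω)) ω ∂μ
        ≤ (γ n : ℝ≥0∞) * ∫⁻ ω, (S n).indicator (fun ω => V (Z n ω)) ω ∂μ) :
    ∀ n : ℕ,
      (∫⁻ ω, (S n).indicator (fun ω => V (Z n ω)) ω ∂μ
        ≤ (∏ k ∈ Finset.range n, (γ k : ℝ≥0∞)) * ∫⁻ ω, V (Z 0 ω) ∂μ) ∧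
      μ (S n)ᶜ
        ≤ (∑ k ∈ Finset.range n, (∏ l ∈ Finset.range k, (γ l : ℝ≥0∞)) / δ k)
            * ∫⁻ ω, V (Z 0 ω) ∂μ :=
  indicator_lyapunov_stability_general μ V Z γ δ hδ S hS hS0 hdiff hrec
end

section
/- Under the assumptions of the two-sided stability setting, if additionally V̄ : E → [0,∞] is measurable with V̄ ≤ V pointwise and p ∈ [1,∞], then E[V̄(Z_n)] ≤ (∏_{k=0}^{n−1} γ_k)·E[V(Z_0)] + ‖V̄(Z_n)‖_{L^p} · [(∑_{k=0}^{n−1}(∏_{l=0}^{k−1} γ_l)/δ_k)·E[V(Z_0)]]^{1−1/p}. -/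
open MeasureTheory ENNReal NNReal

/-! Split `E[V̄(Z_n)]` along `S_n`. On `S_n` use `V̄ ≤ V` and iterate the recursion, which gives
`∫_{S_n} V(Z_n) ≤ (∏_{k<n} γ_k) E[V(Z_0)]`. Off `S_n`, Hölder's inequality gives the factor
`‖V̄(Z_n)‖_p μ(S_nᶜ)^(1-1/p)`. Since `S_0 = Ω`, the set `S_nᶜ` is covered by the exit sets
`S_k \ S_{k+1}`, `k < n`, on which `V(Z_k) > δ_k`, so Markov's inequality bounds the measure of
each by `(∏_{l<k} γ_l) E[V(Z_0)] / δ_k`. -/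

noncomputable def lpNormENNReal {Ω : Type*} [MeasurableSpace Ω] (μ : Measure Ω)
    (p : ℝ≥0∞) (X : Ω → ℝ≥0∞) : ℝ≥0∞ :=
  if p = ∞ then essSup X μ else (∫⁻ ω, X ω ^ p.toReal ∂μ) ^ (1 / p.toReal)

section LpBound

variable {Ω : Type*} [MeasurableSpace Ω] {μ : Measure Ω} {p : ℝ≥0∞} {f : Ω → ℝ≥0∞}

theorem lpNormENNReal_eq_eLpNorm (hp : p ≠ 0) : lpNormENNReal μ p f = eLpNorm f p μ := by
  by_cases hp_top : p = ∞
  · simp [lpNormENNReal, hp_top, eLpNormEssSup]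
  · simp [lpNormENNReal, hp_top, eLpNorm_eq_eLpNorm' hp hp_top, eLpNorm']

theorem setLIntegral_le_lpNormENNReal_mul_measure_rpow (hf : AEMeasurable f μ) (hp : 1 ≤ p)
    (A : Set Ω) : ∫⁻ ω in A, f ω ∂μ ≤ lpNormENNReal μ p f * μ A ^ (1 - 1 / p.toReal) := by
  have holder := eLpNorm_le_eLpNorm_mul_rpow_measure_univ hp hf.aestronglyMeasurable.restrict
    (μ := μ.restrict A)
  rw [eLpNorm_one_eq_lintegral_enorm, Measure.restrict_apply_univ, toReal_one, div_one] at holder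
  rw [lpNormENNReal_eq_eLpNorm (one_pos.trans_le hp).ne']
  calc ∫⁻ ω in A, f ω ∂μ ≤ eLpNorm f p (μ.restrict A) * μ A ^ (1 - 1 / p.toReal) := holder
    _ ≤ eLpNorm f p μ * μ A ^ (1 - 1 / p.toReal) := mul_le_mul_left (eLpNorm_restrict_le f p μ A) _

end LpBound

theorem meas_lt_le_lintegral_div {Ω : Type*} [MeasurableSpace Ω] {μ : Measure Ω}
    {f : Ω → ℝ≥0∞} (hf : AEMeasurable f μ) (c : ℝ≥0∞) :
    μ {ω | c < f ω} ≤ (∫⁻ ω, f ω ∂μ) / c := by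
  rcases eq_top_or_lt_top c with rfl | hc_top
  · simp
  obtain ⟨rfl, hf0⟩ | hc := em (c = 0 ∧ ∫⁻ ω, f ω ∂μ = 0)
  -- `0 / 0 = 0` in `ℝ≥0∞`, so here the bound needs `f = 0` a.e.
  · have hf_ae : f =ᵐ[μ] 0 := (lintegral_eq_zero_iff' hf).1 hf0
    have hzero : μ {ω | 0 < f ω} = 0 :=
      measure_eq_zero_iff_ae_notMem.2 (hf_ae.mono fun ω hω => by simp [hω])
    simp [hzero]
  · rw [ENNReal.le_div_iff_mul_le (by tauto) (Or.inl hc_top.ne), mul_comm]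
    calc c * μ {ω | c < f ω} ≤ c * μ {ω | c ≤ f ω} := by gcongr; exact le_of_lt
      _ ≤ ∫⁻ ω, f ω ∂μ := mul_meas_ge_le_lintegral₀ hf c

theorem le_prod_range_mul_of_le_mul {a c : ℕ → ℝ≥0∞} (h : ∀ n, a (n + 1) ≤ c n * a n) (n : ℕ) :
    a n ≤ (∏ k ∈ Finset.range n, c k) * a 0 := by
  induction n with
  | zero => simp
  | succ n ih =>
    calc a (n + 1) ≤ c n * a n := h n
      _ ≤ c n * ((∏ k ∈ Finset.range n, c k) * a 0) := by gcongr
      _ = (∏ k ∈ Finset.range (n + 1), c k) * a 0 := by rw [Finset.prod_range_succ]; ring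

theorem measure_diff_le_sum_measure_diff_succ {Ω : Type*} [MeasurableSpace Ω] (μ : Measure Ω)
    (s : ℕ → Set Ω) (n : ℕ) :
    μ (s 0 \ s n) ≤ ∑ k ∈ Finset.range n, μ (s k \ s (k + 1)) := by
  induction n with
  | zero => simp
  | succ n ih =>
    calc μ (s 0 \ s (n + 1)) ≤ μ (s 0 \ s n ∪ s n \ s (n + 1)) := by
          gcongr; intro ω; by_cases ω ∈ s n <;> simp_all
      _ ≤ μ (s 0 \ s n) + μ (s n \ s (n + 1)) := measure_union_le _ _
      _ ≤ _ := by rw [Finset.sum_range_succ]; gcongr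

theorem one_sub_one_div_toReal_nonneg {p : ℝ≥0∞} (hp : 1 ≤ p) : 0 ≤ 1 - 1 / p.toReal := by
  rcases eq_or_ne p ∞ with rfl | hp_top
  · simp
  · have : 1 ≤ p.toReal := by simpa using ENNReal.toReal_mono hp_top hp
    exact sub_nonneg.2 (div_le_one_of_le₀ this ENNReal.toReal_nonneg)

section Stability

variable {Ω E : Type*} [MeasurableSpace Ω] {μ : Measure Ω}
  {V : E → ℝ≥0∞} {Z : ℕ → Ω → E} {γ : ℕ → ℝ≥0} {δ : ℕ → ℝ≥0∞} {S : ℕ → Set Ω}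

theorem lintegral_indicator_le_prod_mul (hS0 : S 0 = Set.univ)
    (hrec : ∀ n,
      ∫⁻ ω, (S (n + 1)).indicator (fun ω => V (Z (n + 1) ω)) ω ∂μ
        ≤ (γ n : ℝ≥0∞) * ∫⁻ ω, (S n).indicator (fun ω => V (Z n ω)) ω ∂μ) (n : ℕ) :
    ∫⁻ ω, (S n).indicator (fun ω => V (Z n ω)) ω ∂μ
      ≤ (∏ k ∈ Finset.range n, (γ k : ℝ≥0∞)) * ∫⁻ ω, V (Z 0 ω) ∂μ := by
  simpa [hS0] using le_prod_range_mul_of_le_mul hrec n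

theorem measure_diff_succ_le [MeasurableSpace E] (hV : Measurable V) (hZ : ∀ n, Measurable (Z n))
    (hS : ∀ n, MeasurableSet (S n)) (hS0 : S 0 = Set.univ)
    (hdiff : ∀ n, S n \ S (n + 1) ⊆ {ω | δ n < V (Z n ω)})
    (hrec : ∀ n,
      ∫⁻ ω, (S (n + 1)).indicator (fun ω => V (Z (n + 1) ω)) ω ∂μ
        ≤ (γ n : ℝ≥0∞) * ∫⁻ ω, (S n).indicator (fun ω => V (Z n ω)) ω ∂μ) (n : ℕ) :
    μ (S n \ S (n + 1))
      ≤ (∏ l ∈ Finset.range n, (γ l : ℝ≥0∞)) / δ n * ∫⁻ ω, V (Z 0 ω) ∂μ := by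
  set f := (S n).indicator (fun ω => V (Z n ω))
  calc μ (S n \ S (n + 1)) ≤ μ {ω | δ n < f ω} :=
        measure_mono fun ω hω => by simpa [f, hω.1] using hdiff n hω
    _ ≤ (∫⁻ ω, f ω ∂μ) / δ n :=
        meas_lt_le_lintegral_div ((hV.comp (hZ n)).indicator (hS n)).aemeasurable _
    _ ≤ (∏ l ∈ Finset.range n, (γ l : ℝ≥0∞)) * (∫⁻ ω, V (Z 0 ω) ∂μ) / δ n := by
        gcongr; exact lintegral_indicator_le_prod_mul hS0 hrec n
    _ = _ := ENNReal.mul_div_right_comm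

theorem measure_compl_le [MeasurableSpace E] (hV : Measurable V) (hZ : ∀ n, Measurable (Z n))
    (hS : ∀ n, MeasurableSet (S n)) (hS0 : S 0 = Set.univ)
    (hdiff : ∀ n, S n \ S (n + 1) ⊆ {ω | δ n < V (Z n ω)})
    (hrec : ∀ n,
      ∫⁻ ω, (S (n + 1)).indicator (fun ω => V (Z (n + 1) ω)) ω ∂μ
        ≤ (γ n : ℝ≥0∞) * ∫⁻ ω, (S n).indicator (fun ω => V (Z n ω)) ω ∂μ) (n : ℕ) :
    μ (S n)ᶜ ≤ (∑ k ∈ Finset.range n, (∏ l ∈ Finset.range k, (γ l : ℝ≥0∞)) / δ k)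
      * ∫⁻ ω, V (Z 0 ω) ∂μ := by
  calc μ (S n)ᶜ = μ (S 0 \ S n) := by rw [hS0, Set.compl_eq_univ_sdiff]
    _ ≤ ∑ k ∈ Finset.range n, μ (S k \ S (k + 1)) := measure_diff_le_sum_measure_diff_succ μ S n
    _ ≤ ∑ k ∈ Finset.range n,
          (∏ l ∈ Finset.range k, (γ l : ℝ≥0∞)) / δ k * ∫⁻ ω, V (Z 0 ω) ∂μ :=
        Finset.sum_le_sum fun k _ => measure_diff_succ_le hV hZ hS hS0 hdiff hrec k
    _ = _ := (Finset.sum_mul _ _ _).symm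

end Stability

theorem lyapunov_stability_ebar_general
    {Ω E : Type*} [MeasurableSpace Ω] [MeasurableSpace E]
    (μ : Measure Ω)
    (V : E → ℝ≥0∞) (hV : Measurable V)
    (Vbar : E → ℝ≥0∞) (hVbar : Measurable Vbar) (hle : ∀ x, Vbar x ≤ V x)
    (Z : ℕ → Ω → E) (hZ : ∀ n, Measurable (Z n))
    (γ : ℕ → ℝ≥0) (δ : ℕ → ℝ≥0∞)
    (S : ℕ → Set Ω) (hS : ∀ n, MeasurableSet (S n)) (hS0 : S 0 = Set.univ)
    (hdiff : ∀ n, S n \ S (n + 1) ⊆ {ω | δ n < V (Z n ω)})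
    (hrec : ∀ n,
      ∫⁻ ω, (S (n + 1)).indicator (fun ω => V (Z (n + 1) ω)) ω ∂μ
        ≤ (γ n : ℝ≥0∞) * ∫⁻ ω, (S n).indicator (fun ω => V (Z n ω)) ω ∂μ)
    (p : ℝ≥0∞) (hp : 1 ≤ p) :
    ∀ n : ℕ,
      ∫⁻ ω, Vbar (Z n ω) ∂μ
        ≤ (∏ k ∈ Finset.range n, (γ k : ℝ≥0∞)) * ∫⁻ ω, V (Z 0 ω) ∂μ
          + lpNormENNReal μ p (fun ω => Vbar (Z n ω))
            * ((∑ k ∈ Finset.range n, (∏ l ∈ Finset.range k, (γ l : ℝ≥0∞)) / δ k)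
                * ∫⁻ ω, V (Z 0 ω) ∂μ) ^ (if p = ∞ then (1 : ℝ) else 1 - 1 / p.toReal) := by
  intro n
  -- `1 / ∞.toReal = 0`, so the case distinction in the exponent is only cosmetic.
  have hexp : (if p = ∞ then (1 : ℝ) else 1 - 1 / p.toReal) = 1 - 1 / p.toReal := by
    split_ifs with h <;> simp [h]
  rw [hexp, ← lintegral_add_compl _ (hS n)]
  refine add_le_add ?_ ?_
  · calc ∫⁻ ω in S n, Vbar (Z n ω) ∂μ ≤ ∫⁻ ω in S n, V (Z n ω) ∂μ :=
          lintegral_mono fun ω => hle _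
      _ = ∫⁻ ω, (S n).indicator (fun ω => V (Z n ω)) ω ∂μ := (lintegral_indicator (hS n) _).symm
      _ ≤ _ := lintegral_indicator_le_prod_mul hS0 hrec n
  · calc ∫⁻ ω in (S n)ᶜ, Vbar (Z n ω) ∂μ
          ≤ lpNormENNReal μ p (fun ω => Vbar (Z n ω)) * μ (S n)ᶜ ^ (1 - 1 / p.toReal) :=
          setLIntegral_le_lpNormENNReal_mul_measure_rpow (hVbar.comp (hZ n)).aemeasurable hp _
      _ ≤ _ := mul_le_mul_right (ENNReal.rpow_le_rpow (measure_compl_le hV hZ hS hS0 hdiff hrec n)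
            (one_sub_one_div_toReal_nonneg hp)) _

/-- Under the two-sided stability assumptions, for measurable `V̄ ≤ V` and `p ∈ [1,∞]`,
`E[V̄(Z_n)] ≤ (∏_{k<n} γ_k) E[V(Z_0)]
  + ‖V̄(Z_n)‖_{L^p} ((∑_{k<n} (∏_{l<k} γ_l)/δ_k) E[V(Z_0)])^(1−1/p)`. -/
theorem lyapunov_stability_ebar
    {Ω E : Type*} [MeasurableSpace Ω] [MeasurableSpace E]
    (μ : Measure Ω) [IsProbabilityMeasure μ]
    (V : E → ℝ≥0∞) (hV : Measurable V)
    (Vbar : E → ℝ≥0∞) (hVbar : Measurable Vbar) (hle : ∀ x, Vbar x ≤ V x)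
    (Z : ℕ → Ω → E) (hZ : ∀ n, Measurable (Z n))
    (γ : ℕ → ℝ≥0) (δ : ℕ → ℝ≥0∞) (hδ : ∀ n, 0 < δ n)
    (S : ℕ → Set Ω) (hS : ∀ n, MeasurableSet (S n)) (hS0 : S 0 = Set.univ)
    (hdiff : ∀ n, S n \ S (n + 1) ⊆ {ω | δ n < V (Z n ω)})
    (hrec : ∀ n,
      ∫⁻ ω, (S (n + 1)).indicator (fun ω => V (Z (n + 1) ω)) ω ∂μ
        ≤ (γ n : ℝ≥0∞) * ∫⁻ ω, (S n).indicator (fun ω => V (Z n ω)) ω ∂μ)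
    (p : ℝ≥0∞) (hp : 1 ≤ p) :
    ∀ n : ℕ,
      ∫⁻ ω, Vbar (Z n ω) ∂μ
        ≤ (∏ k ∈ Finset.range n, (γ k : ℝ≥0∞)) * ∫⁻ ω, V (Z 0 ω) ∂μ
          + lpNormENNReal μ p (fun ω => Vbar (Z n ω))
            * ((∑ k ∈ Finset.range n, (∏ l ∈ Finset.range k, (γ l : ℝ≥0∞)) / δ k)
                * ∫⁻ ω, V (Z 0 ω) ∂μ) ^ (if p = ∞ then (1 : ℝ) else 1 - 1 / p.toReal) :=
  lyapunov_stability_ebar_general μ V hV Vbar hVbar hle Z hZ γ δ S hS hS0 hdiff hrec p hp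
end

section
/- Let q ∈ [1,∞), d, m ∈ ℕ, μ : ℝ^d → ℝ^d and σ : ℝ^d → ℝ^{d×m} be functions, and for t ∈ (0,∞), x ∈ ℝ^d, y ∈ ℝ^m define Φ(x,t,y) = (μ(x)t + σ(x)y)/(1 + ‖μ(x)t + σ(x)y‖^q). Then for all x, t, y, ‖((∂/∂t)Φ)(x,t,y) − μ(x)‖ ≤ (q+1)·‖μ(x)t + σ(x)y‖^q · ‖μ(x)‖. -/
/-!
Write `u s = μ(x) s + σ(x) y` and `h = (1 + ‖u‖^q)⁻¹`, so that `Φ = h • u` and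
`∂ₜΦ - μ(x) = h' • u + (h - 1) • μ(x)`. Where `u t ≠ 0`, the derivative of `‖u‖` is
`⟪u, u'⟫ / ‖u‖`, of size at most `‖u'‖` by Cauchy–Schwarz, which gives
`|h'| ‖u‖ ≤ q ‖u‖^q ‖μ(x)‖`; and `|h - 1| = ‖u‖^q / (1 + ‖u‖^q) ≤ ‖u‖^q`.
Where `u t = 0` the factor `h` need not be differentiable (`q = 1`), but it is continuous,
and that suffices: the slope of `h • u` at `t` is `h • slope u`, so `∂ₜΦ = h(t) • μ(x) = μ(x)`.
-/

open Real
open scoped RealInnerProductSpace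

theorem HasDerivAt.smul_of_eq_zero {𝕜 F : Type*} [NontriviallyNormedField 𝕜]
    [NormedAddCommGroup F] [NormedSpace 𝕜 F] {h : 𝕜 → 𝕜} {u : 𝕜 → F} {u' : F} {t : 𝕜}
    (hh : ContinuousAt h t) (hu : HasDerivAt u u' t) (h0 : u t = 0) :
    HasDerivAt (fun s => h s • u s) (h t • u') t := by
  rw [hasDerivAt_iff_tendsto_slope] at hu ⊢
  have hslope : slope (fun s => h s • u s) t = fun s => h s • slope u t s := by
    ext s
    simp only [slope_def_module, h0, smul_zero, sub_zero, smul_comm (h s)]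
  rw [hslope]
  exact (hh.tendsto.mono_left nhdsWithin_le_nhds).smul hu

theorem abs_inv_one_add_sub_one_le {x : ℝ} (hx : 0 ≤ x) : |(1 + x)⁻¹ - 1| ≤ x := by
  have hpos : 0 < 1 + x := by linarith
  rw [abs_sub_comm, abs_of_nonneg (sub_nonneg.2 (inv_le_one_of_one_le₀ (by linarith))),
    sub_le_iff_le_add, ← sub_le_iff_le_add', inv_eq_one_div, le_div_iff₀ hpos]
  nlinarith

theorem EuclideanSpace.norm_toLp_eq_sqrt {ι : Type*} [Fintype ι] (v : ι → ℝ) :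
    ‖WithLp.toLp 2 v‖ = √(∑ i, v i ^ 2) := by
  simp [EuclideanSpace.norm_eq]

section Tamed

variable {E : Type*} [NormedAddCommGroup E] [InnerProductSpace ℝ E] {u : ℝ → E} {u' : E} {t : ℝ}

theorem HasDerivAt.norm_of_ne_zero (hu : HasDerivAt u u' t) (h0 : u t ≠ 0) :
    HasDerivAt (fun s => ‖u s‖) (⟪u t, u'⟫ / ‖u t‖) t := by
  have h := hu.norm_sq.sqrt (by positivity)
  simp only [Real.sqrt_sq (norm_nonneg _)] at h
  convert h using 1
  field_simp

theorem exists_hasDerivAt_inv_one_add_norm_rpow {q : ℝ} (hq : 0 ≤ q) (hu : HasDerivAt u u' t)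
    (h0 : u t ≠ 0) :
    ∃ h', HasDerivAt (fun s => (1 + ‖u s‖ ^ q)⁻¹) h' t ∧
      |h'| * ‖u t‖ ≤ q * ‖u t‖ ^ q * ‖u'‖ := by
  set a := ‖u t‖
  have ha : 0 < a := norm_pos_iff.2 h0
  have hD : 1 ≤ (1 + a ^ q) ^ 2 := one_le_pow₀ (by simp; positivity)
  refine ⟨_, (((hu.norm_of_ne_zero h0).rpow_const (Or.inl ha.ne')).const_add 1).inv
    (by positivity), ?_⟩
  have hinner : |⟪u t, u'⟫ / a| ≤ ‖u'‖ := by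
    rw [abs_div, abs_of_pos ha, div_le_iff₀ ha, mul_comm]
    exact abs_real_inner_le_norm _ _
  have hpow : a ^ (q - 1) * a = a ^ q := by
    rw [← rpow_add_one ha.ne', sub_add_cancel]
  calc |-(⟪u t, u'⟫ / a * q * a ^ (q - 1)) / (1 + a ^ q) ^ 2| * a
      = q * a ^ q * |⟪u t, u'⟫ / a| / (1 + a ^ q) ^ 2 := by
        rw [abs_div, abs_neg, abs_of_pos (by positivity : (0 : ℝ) < (1 + a ^ q) ^ 2), abs_mul,
          abs_mul, abs_of_nonneg hq, abs_of_pos (by positivity : 0 < a ^ (q - 1)), ← hpow]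
        ring
    _ ≤ q * a ^ q * |⟪u t, u'⟫ / a| := div_le_self (by positivity) hD
    _ ≤ q * a ^ q * ‖u'‖ := by gcongr

theorem exists_hasDerivAt_inv_one_add_norm_rpow_smul {q : ℝ} (hq : 0 < q)
    (hu : HasDerivAt u u' t) :
    ∃ Φ', HasDerivAt (fun s => (1 + ‖u s‖ ^ q)⁻¹ • u s) Φ' t ∧
      ‖Φ' - u'‖ ≤ (q + 1) * ‖u t‖ ^ q * ‖u'‖ := by
  by_cases h0 : u t = 0
  · have hcont : ContinuousAt (fun s => (1 + ‖u s‖ ^ q)⁻¹) t :=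
      (continuousAt_const.add (hu.continuousAt.norm.rpow_const (Or.inr hq.le))).inv₀
        (by simp only [Pi.add_apply]; positivity)
    refine ⟨_, hu.smul_of_eq_zero hcont h0, ?_⟩
    simp [h0, zero_rpow hq.ne']
  · obtain ⟨h', hh', hbound⟩ := exists_hasDerivAt_inv_one_add_norm_rpow hq.le hu h0
    refine ⟨_, hh'.smul hu, ?_⟩
    set a := ‖u t‖
    calc ‖(1 + a ^ q)⁻¹ • u' + h' • u t - u'‖
        = ‖h' • u t + ((1 + a ^ q)⁻¹ - 1) • u'‖ := by rw [sub_smul, one_smul]; abel_nf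
      _ ≤ |h'| * a + |(1 + a ^ q)⁻¹ - 1| * ‖u'‖ := by
        refine (norm_add_le _ _).trans_eq ?_
        rw [norm_smul, norm_smul, Real.norm_eq_abs, Real.norm_eq_abs]
      _ ≤ q * a ^ q * ‖u'‖ + a ^ q * ‖u'‖ := by
        gcongr
        exact abs_inv_one_add_sub_one_le (by positivity)
      _ = (q + 1) * a ^ q * ‖u'‖ := by ring

end Tamed

theorem tamed_increment_time_derivative_bound_general
    (d m : ℕ) (q : ℝ) (hq : 1 ≤ q)
    (μ : (Fin d → ℝ) → (Fin d → ℝ)) (σ : (Fin d → ℝ) → Matrix (Fin d) (Fin m) ℝ)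
    (x : Fin d → ℝ) (t : ℝ) (y : Fin m → ℝ) :
    Real.sqrt (∑ i,
        ((deriv (fun s : ℝ =>
            (1 + Real.sqrt (∑ k, (μ x k * s + (σ x).mulVec y k) ^ 2) ^ q)⁻¹
              • (fun k => μ x k * s + (σ x).mulVec y k) : ℝ → (Fin d → ℝ)) t) i
          - μ x i) ^ 2)
      ≤ (q + 1) * Real.sqrt (∑ k, (μ x k * t + (σ x).mulVec y k) ^ 2) ^ q
          * Real.sqrt (∑ i, (μ x i) ^ 2) := by
  set c := μ x
  set b := (σ x).mulVec y
  let u : ℝ → EuclideanSpace ℝ (Fin d) := fun s => WithLp.toLp 2 (fun k => c k * s + b k)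
  have hu : HasDerivAt u (WithLp.toLp 2 c) t := by
    have hu_eq : u = fun s => s • WithLp.toLp 2 c + WithLp.toLp 2 b := by
      ext s k
      simp [u, mul_comm]
    rw [hu_eq]
    simpa using ((hasDerivAt_id t).smul_const (WithLp.toLp 2 c)).add_const (WithLp.toLp 2 b)
  obtain ⟨Φ', hΦ, hbound⟩ := exists_hasDerivAt_inv_one_add_norm_rpow_smul (by linarith) hu
  simp only [u, EuclideanSpace.norm_toLp_eq_sqrt] at hΦ hbound
  have hΦpi : HasDerivAt
      (fun s => (1 + √(∑ k, (c k * s + b k) ^ 2) ^ q)⁻¹ • fun k => c k * s + b k)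
      (WithLp.ofLp Φ') t :=
    (EuclideanSpace.equiv (Fin d) ℝ).hasFDerivAt.comp_hasDerivAt t hΦ
  rw [hΦpi.deriv]
  simpa [EuclideanSpace.norm_eq] using hbound

/-- For the increment-tamed map `Φ(x,t,y) = (μ(x)t + σ(x)y)/(1 + ‖μ(x)t + σ(x)y‖^q)`,
`‖(∂Φ/∂t)(x,t,y) − μ(x)‖ ≤ (q+1) ‖μ(x)t + σ(x)y‖^q ‖μ(x)‖`. -/
theorem tamed_increment_time_derivative_bound
    (d m : ℕ) (q : ℝ) (hq : 1 ≤ q)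
    (μ : (Fin d → ℝ) → (Fin d → ℝ)) (σ : (Fin d → ℝ) → Matrix (Fin d) (Fin m) ℝ)
    (x : Fin d → ℝ) (t : ℝ) (ht : 0 < t) (y : Fin m → ℝ) :
    Real.sqrt (∑ i,
        ((deriv (fun s : ℝ =>
            (1 + Real.sqrt (∑ k, (μ x k * s + (σ x).mulVec y k) ^ 2) ^ q)⁻¹
              • (fun k => μ x k * s + (σ x).mulVec y k) : ℝ → (Fin d → ℝ)) t) i
          - μ x i) ^ 2)
      ≤ (q + 1) * Real.sqrt (∑ k, (μ x k * t + (σ x).mulVec y k) ^ 2) ^ q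
          * Real.sqrt (∑ i, (μ x i) ^ 2) :=
  tamed_increment_time_derivative_bound_general d m q hq μ σ x t y
end

section
/- Let p, c ∈ [1,∞), let U ∈ C¹(ℝ^d, [0,∞)) satisfy ‖U'(x)‖ ≤ c(1 + U(x))^{1−1/p} for all x ∈ ℝ^d. Then for all x, y ∈ ℝ^d, 1 + U(x + y) ≤ c^p · 2^{p−1} · (1 + U(x) + ‖y‖^p). -/
/-!
The hypothesis says exactly that `(1 + U) ^ (1 / p)` has derivative
`(1 / p) (1 + U) ^ (1 / p - 1) U'` of norm at most `c / p ≤ c`, so by the mean value inequality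
`(1 + U (x + y)) ^ (1 / p) ≤ (1 + U x) ^ (1 / p) + c ‖y‖`. Raising this to the power `p` and using
convexity of `t ↦ t ^ p` in the form `(a + b) ^ p ≤ 2 ^ (p - 1) (a ^ p + b ^ p)` gives the bound.
-/

open Real

lemma Real.add_rpow_le_two_rpow_mul {a b p : ℝ} (ha : 0 ≤ a) (hb : 0 ≤ b) (hp : 1 ≤ p) :
    (a + b) ^ p ≤ 2 ^ (p - 1) * (a ^ p + b ^ p) := by
  exact_mod_cast NNReal.rpow_add_le_mul_rpow_add_rpow ⟨a, ha⟩ ⟨b, hb⟩ hp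

section

variable {E : Type*} [NormedAddCommGroup E] [NormedSpace ℝ E] {f : E → ℝ} {p c : ℝ}

lemma norm_fderiv_rpow_one_div_le {x : E} (hp : 0 < p) (hf : DifferentiableAt ℝ f x)
    (hfx : 0 < f x) (hgrad : ‖fderiv ℝ f x‖ ≤ c * f x ^ (1 - 1 / p)) :
    ‖fderiv ℝ (fun z => f z ^ (1 / p)) x‖ ≤ c / p := by
  rw [(hf.hasFDerivAt.rpow_const (p := 1 / p) (Or.inl hfx.ne')).fderiv, norm_smul,
    Real.norm_of_nonneg (by positivity)]
  calc 1 / p * f x ^ (1 / p - 1) * ‖fderiv ℝ f x‖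
      ≤ 1 / p * f x ^ (1 / p - 1) * (c * f x ^ (1 - 1 / p)) := by gcongr
    _ = c / p * (f x ^ (1 / p - 1) * f x ^ (1 - 1 / p)) := by ring
    _ = c / p := by rw [← rpow_add hfx]; simp

lemma rpow_one_div_add_le_of_norm_fderiv_le (hp : 0 < p) (hf : Differentiable ℝ f)
    (hpos : ∀ x, 0 < f x) (hgrad : ∀ x, ‖fderiv ℝ f x‖ ≤ c * f x ^ (1 - 1 / p)) (x y : E) :
    f (x + y) ^ (1 / p) ≤ f x ^ (1 / p) + c / p * ‖y‖ := by
  have hdiff : Differentiable ℝ fun z => f z ^ (1 / p) :=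
    fun z => (hf z).rpow_const (Or.inl (hpos z).ne')
  have hmv := convex_univ.norm_image_sub_le_of_norm_fderiv_le (fun z _ => hdiff z)
    (fun z _ => norm_fderiv_rpow_one_div_le hp (hf z) (hpos z) (hgrad z))
    (Set.mem_univ x) (Set.mem_univ (x + y))
  rw [add_sub_cancel_left] at hmv
  linarith [le_of_abs_le hmv]

end

/-- If `U ∈ C¹(ℝ^d,[0,∞))` satisfies `‖U'(x)‖ ≤ c(1 + U(x))^(1−1/p)` for all `x`,
then `1 + U(x + y) ≤ c^p 2^(p−1) (1 + U(x) + ‖y‖^p)`. -/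
theorem growth_bound_of_derivative_bound
    (d : ℕ) (p c : ℝ) (hp : 1 ≤ p) (hc : 1 ≤ c)
    (U : EuclideanSpace ℝ (Fin d) → ℝ) (hU : ContDiff ℝ 1 U) (hU0 : ∀ x, 0 ≤ U x)
    (hgrad : ∀ x, ‖fderiv ℝ U x‖ ≤ c * (1 + U x) ^ (1 - 1 / p)) :
    ∀ x y : EuclideanSpace ℝ (Fin d),
      1 + U (x + y) ≤ c ^ p * 2 ^ (p - 1) * (1 + U x + ‖y‖ ^ p) := by
  intro x y
  have hp0 : 0 < p := by linarith
  have hpos : ∀ z, 0 < 1 + U z := fun z => by linarith [hU0 z]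
  have hdiff : Differentiable ℝ fun z => 1 + U z := (hU.differentiable one_ne_zero).const_add 1
  have hstep := rpow_one_div_add_le_of_norm_fderiv_le hp0 hdiff hpos
    (fun z => by simpa only [fderiv_const_add] using hgrad z) x y
  have hroot : ∀ z, ((1 + U z) ^ (1 / p)) ^ p = 1 + U z := fun z => by
    rw [← rpow_mul (hpos z).le, one_div_mul_cancel hp0.ne', rpow_one]
  have hc0 : 0 ≤ c := by linarith
  have hcp : 1 ≤ c ^ p := one_le_rpow hc hp0.le
  calc 1 + U (x + y) = ((1 + U (x + y)) ^ (1 / p)) ^ p := (hroot _).symm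
    _ ≤ ((1 + U x) ^ (1 / p) + c * ‖y‖) ^ p := by
      refine rpow_le_rpow (rpow_nonneg (hpos _).le _) (hstep.trans ?_) hp0.le
      gcongr
      exact div_le_self hc0 hp
    _ ≤ 2 ^ (p - 1) * (((1 + U x) ^ (1 / p)) ^ p + (c * ‖y‖) ^ p) :=
      add_rpow_le_two_rpow_mul (rpow_nonneg (hpos x).le _) (by positivity) hp
    _ = 2 ^ (p - 1) * (1 + U x + c ^ p * ‖y‖ ^ p) := by
      rw [hroot, mul_rpow hc0 (norm_nonneg y)]
    _ ≤ 2 ^ (p - 1) * (c ^ p * (1 + U x + ‖y‖ ^ p)) := by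
      have : 1 + U x ≤ c ^ p * (1 + U x) := le_mul_of_one_le_left (hpos x).le hcp
      gcongr
      linarith [mul_add (c ^ p) (1 + U x) (‖y‖ ^ p)]
    _ = c ^ p * 2 ^ (p - 1) * (1 + U x + ‖y‖ ^ p) := by ring
end

section
/- Let p, c ∈ [1,∞), i ∈ {0,1,2}, and U ∈ C^{i+1}(ℝ^d, [0,∞)) satisfy ‖U^{(j)}(x)‖ ≤ c(1 + U(x))^{max(1−j/p,0)} for all x ∈ ℝ^d and j ∈ {1,...,i+1}. Then for all x, y ∈ ℝ^d, ‖U^{(i)}(y) − U^{(i)}(x)‖ ≤ ((2c)^p / 2) · (1 + U(x)^{max(p−i−1,0)/p} + ‖y−x‖^{max(p−i−1,0)}) · ‖y − x‖. -/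
/-!
The bound on `U'` makes `ψ = (1 + U) ^ (1 / p)` Lipschitz with constant `c / p ≤ c`, and the
bound on `U^(i+1)` reads `‖U^(i+1)‖ ≤ c ψ ^ α` with `α = max (p - i - 1) 0`. So on the ball of
radius `r = ‖y - x‖` around `x` the derivative of `U^(i)` is at most `c (ψ x + c r) ^ α`, and the
mean value inequality bounds `‖U^(i)(y) - U^(i)(x)‖` by that times `r`. Splitting
`(ψ x + c r) ^ α ≤ (2c) ^ α (ψ x ^ α + r ^ α)` and using `α ≤ p - 1` gives the constant.
-/

open Real Metric

namespace Real

theorem add_rpow_le_two_rpow_mul_add_rpow {a b α : ℝ} (ha : 0 ≤ a) (hb : 0 ≤ b) (hα : 0 ≤ α) :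
    (a + b) ^ α ≤ 2 ^ α * (a ^ α + b ^ α) := by
  wlog hab : a ≤ b generalizing a b
  · simpa only [add_comm] using this hb ha (le_of_not_ge hab)
  calc (a + b) ^ α ≤ (2 * b) ^ α := by gcongr; linarith
    _ = 2 ^ α * b ^ α := mul_rpow zero_le_two hb
    _ ≤ 2 ^ α * (a ^ α + b ^ α) := by
        gcongr; exact le_add_of_nonneg_left (rpow_nonneg ha α)

theorem one_add_rpow_le_one_add_rpow {u θ : ℝ} (hu : 0 ≤ u) (hθ0 : 0 ≤ θ) (hθ1 : θ ≤ 1) :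
    (1 + u) ^ θ ≤ 1 + u ^ θ := by
  simpa using rpow_add_le_add_rpow zero_le_one hu hθ0 hθ1

theorem rpow_max_one_sub_div {a p q : ℝ} (ha : 0 ≤ a) (hp : 0 < p) :
    a ^ max (1 - q / p) 0 = (a ^ (1 / p)) ^ max (p - q) 0 := by
  rw [← rpow_mul ha, mul_max_of_nonneg _ _ (by positivity), mul_zero]
  congr 2; field_simp

theorem mul_rpow_add_mul_le {A r c α p : ℝ} (hA : 0 ≤ A) (hr : 0 ≤ r) (hc : 1 ≤ c)
    (hα : 0 ≤ α) (hαp : α ≤ p - 1) :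
    c * (A + c * r) ^ α ≤ (2 * c) ^ p / 2 * (A ^ α + r ^ α) := by
  have hc0 : 0 ≤ c := zero_le_one.trans hc
  calc c * (A + c * r) ^ α ≤ c * (c * (A + r)) ^ α := by gcongr; nlinarith
    _ = c ^ (1 + α) * (A + r) ^ α := by
        rw [mul_rpow hc0 (by positivity), rpow_add (by positivity), rpow_one, mul_assoc]
    _ ≤ c ^ (1 + α) * (2 ^ α * (A ^ α + r ^ α)) := by
        gcongr; exact add_rpow_le_two_rpow_mul_add_rpow hA hr hα
    _ ≤ c ^ p * (2 ^ (p - 1) * (A ^ α + r ^ α)) := by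
        gcongr ?_ * (?_ * _)
        · exact rpow_le_rpow_of_exponent_le hc (by linarith)
        · exact rpow_le_rpow_of_exponent_le one_le_two hαp
    _ = (2 * c) ^ p / 2 * (A ^ α + r ^ α) := by
        rw [mul_rpow zero_le_two hc0, rpow_sub zero_lt_two, rpow_one]; ring

end Real

section MeanValue

variable {E F : Type*} [NormedAddCommGroup E] [NormedSpace ℝ E]
  [NormedAddCommGroup F] [NormedSpace ℝ F]

theorem norm_one_add_rpow_one_div_sub_le {U : E → ℝ} {p c : ℝ} (hp : 0 < p)
    (hU : Differentiable ℝ U) (hU0 : ∀ x, 0 ≤ U x)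
    (hU' : ∀ x, ‖fderiv ℝ U x‖ ≤ c * (1 + U x) ^ (1 - 1 / p)) (x y : E) :
    ‖(1 + U y) ^ (1 / p) - (1 + U x) ^ (1 / p)‖ ≤ c / p * ‖y - x‖ := by
  have hpos : ∀ z, 0 < 1 + U z := fun z ↦ by linarith [hU0 z]
  have hderiv : ∀ z, HasFDerivAt (fun u ↦ (1 + U u) ^ (1 / p))
      ((1 / p * (1 + U z) ^ (1 / p - 1)) • fderiv ℝ U z) z := fun z ↦
    ((hU z).hasFDerivAt.const_add 1).rpow_const (Or.inl (hpos z).ne')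
  refine Convex.norm_image_sub_le_of_norm_hasFDerivWithin_le
    (fun z _ ↦ (hderiv z).hasFDerivWithinAt) (fun z _ ↦ ?_) convex_univ trivial trivial
  have hz := hpos z
  rw [norm_smul, norm_of_nonneg (by positivity)]
  calc 1 / p * (1 + U z) ^ (1 / p - 1) * ‖fderiv ℝ U z‖
      ≤ 1 / p * (1 + U z) ^ (1 / p - 1) * (c * (1 + U z) ^ (1 - 1 / p)) := by
        gcongr; exact hU' z
    _ = c / p * (1 + U z) ^ (1 / p - 1 + (1 - 1 / p)) := by
        rw [rpow_add (hpos z)]; ring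
    _ = c / p := by norm_num

theorem norm_image_sub_le_of_norm_fderiv_le_rpow {f : E → F} {ψ : E → ℝ} {c L α : ℝ}
    (hf : Differentiable ℝ f) (hψ0 : ∀ x, 0 ≤ ψ x) (hψ : ∀ x y, ‖ψ y - ψ x‖ ≤ L * ‖y - x‖)
    (hf' : ∀ x, ‖fderiv ℝ f x‖ ≤ c * ψ x ^ α) (hc : 0 ≤ c) (hL : 0 ≤ L) (hα : 0 ≤ α)
    (x y : E) :
    ‖f y - f x‖ ≤ c * (ψ x + L * ‖y - x‖) ^ α * ‖y - x‖ := by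
  refine Convex.norm_image_sub_le_of_norm_fderiv_le (fun z _ ↦ hf z) (fun z hz ↦ ?_)
    (convex_closedBall x ‖y - x‖) (mem_closedBall_self (norm_nonneg _))
    (mem_closedBall_iff_norm.2 le_rfl)
  have hψz : ψ z ≤ ψ x + L * ‖y - x‖ := by
    have := (le_abs_self _).trans (hψ x z)
    nlinarith [mem_closedBall_iff_norm.1 hz]
  calc ‖fderiv ℝ f z‖ ≤ c * ψ z ^ α := hf' z
    _ ≤ c * (ψ x + L * ‖y - x‖) ^ α := by gcongr; exact hψ0 z

theorem norm_iteratedFDeriv_sub_le {U : E → ℝ} {p c α : ℝ} {i : ℕ} (hp : 0 < p) (hc : 0 ≤ c)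
    (hα : 0 ≤ α) (hU : ContDiff ℝ (i + 1) U) (hU0 : ∀ x, 0 ≤ U x)
    (hU' : ∀ x, ‖fderiv ℝ U x‖ ≤ c * (1 + U x) ^ (1 - 1 / p))
    (hUi : ∀ x, ‖iteratedFDeriv ℝ (i + 1) U x‖ ≤ c * ((1 + U x) ^ (1 / p)) ^ α) (x y : E) :
    ‖iteratedFDeriv ℝ i U y - iteratedFDeriv ℝ i U x‖
      ≤ c * ((1 + U x) ^ (1 / p) + c / p * ‖y - x‖) ^ α * ‖y - x‖ :=
  norm_image_sub_le_of_norm_fderiv_le_rpow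
    (hU.differentiable_iteratedFDeriv (by exact_mod_cast i.lt_succ_self))
    (fun z ↦ rpow_nonneg (by linarith [hU0 z]) _)
    (norm_one_add_rpow_one_div_sub_le hp (hU.differentiable (by simp)) hU0 hU')
    (fun z ↦ norm_fderiv_iteratedFDeriv.trans_le (hUi z)) hc (by positivity) hα x y

end MeanValue

theorem iterated_deriv_difference_bound_general
    (d : ℕ) (p c : ℝ) (hp : 1 ≤ p) (hc : 1 ≤ c)
    (i : ℕ)
    (U : EuclideanSpace ℝ (Fin d) → ℝ) (hU : ContDiff ℝ (i + 1) U) (hU0 : ∀ x, 0 ≤ U x)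
    (hder : ∀ x, ∀ j : ℕ, 1 ≤ j → j ≤ i + 1 →
      ‖iteratedFDeriv ℝ j U x‖ ≤ c * (1 + U x) ^ (max (1 - (j : ℝ) / p) 0)) :
    ∀ x y : EuclideanSpace ℝ (Fin d),
      ‖iteratedFDeriv ℝ i U y - iteratedFDeriv ℝ i U x‖
        ≤ ((2 * c) ^ p / 2)
            * (1 + (U x) ^ (max (p - (i : ℝ) - 1) 0 / p)
                + ‖y - x‖ ^ (max (p - (i : ℝ) - 1) 0))
            * ‖y - x‖ := by
  intro x y
  set α := max (p - (i : ℝ) - 1) 0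
  have hp0 : 0 < p := zero_lt_one.trans_le hp
  have hU1 : ∀ z, 0 ≤ 1 + U z := fun z ↦ by linarith [hU0 z]
  have hαp : α ≤ p - 1 := max_le (by linarith [(Nat.cast_nonneg i : (0 : ℝ) ≤ i)]) (by linarith)
  have hU' : ∀ z, ‖fderiv ℝ U z‖ ≤ c * (1 + U z) ^ (1 - 1 / p) := fun z ↦ by
    have h := hder z 1 le_rfl (by omega)
    rwa [Nat.cast_one, max_eq_left (sub_nonneg.2 ((div_le_one hp0).2 hp)),
      norm_iteratedFDeriv_one] at h
  have hUi : ∀ z, ‖iteratedFDeriv ℝ (i + 1) U z‖ ≤ c * ((1 + U z) ^ (1 / p)) ^ α := fun z ↦ by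
    have h := hder z (i + 1) (by omega) le_rfl
    rwa [Nat.cast_succ, rpow_max_one_sub_div (hU1 z) hp0, ← sub_sub] at h
  have hA : ((1 + U x) ^ (1 / p)) ^ α ≤ 1 + U x ^ (α / p) := by
    rw [← rpow_mul (hU1 x), one_div_mul_eq_div]
    exact one_add_rpow_le_one_add_rpow (hU0 x) (by positivity) ((div_le_one hp0).2 (by linarith))
  have hψx := rpow_nonneg (hU1 x) (1 / p)
  calc ‖iteratedFDeriv ℝ i U y - iteratedFDeriv ℝ i U x‖
      ≤ c * ((1 + U x) ^ (1 / p) + c / p * ‖y - x‖) ^ α * ‖y - x‖ :=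
        norm_iteratedFDeriv_sub_le hp0 (by linarith) (le_max_right _ _) hU hU0 hU' hUi x y
    _ ≤ c * ((1 + U x) ^ (1 / p) + c * ‖y - x‖) ^ α * ‖y - x‖ := by
        gcongr c * (_ + ?_ * _) ^ α * _
        exact div_le_self (by linarith) hp
    _ ≤ (2 * c) ^ p / 2 * (((1 + U x) ^ (1 / p)) ^ α + ‖y - x‖ ^ α) * ‖y - x‖ := by
        gcongr ?_ * _
        exact mul_rpow_add_mul_le hψx (norm_nonneg _) hc (le_max_right _ _) hαp
    _ ≤ _ := by gcongr

/-- If `U ∈ C^(i+1)(ℝ^d,[0,∞))` with `i ∈ {0,1,2}` satisfies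
`‖U^(j)(x)‖ ≤ c(1 + U(x))^(max(1−j/p,0))` for `j ∈ {1,…,i+1}`, then
`‖U^(i)(y) − U^(i)(x)‖ ≤ ((2c)^p/2)(1 + U(x)^(max(p−i−1,0)/p) + ‖y−x‖^(max(p−i−1,0)))‖y−x‖`. -/
theorem iterated_deriv_difference_bound
    (d : ℕ) (p c : ℝ) (hp : 1 ≤ p) (hc : 1 ≤ c)
    (i : ℕ) (hi : i ≤ 2)
    (U : EuclideanSpace ℝ (Fin d) → ℝ) (hU : ContDiff ℝ (i + 1) U) (hU0 : ∀ x, 0 ≤ U x)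
    (hder : ∀ x, ∀ j : ℕ, 1 ≤ j → j ≤ i + 1 →
      ‖iteratedFDeriv ℝ j U x‖ ≤ c * (1 + U x) ^ (max (1 - (j : ℝ) / p) 0)) :
    ∀ x y : EuclideanSpace ℝ (Fin d),
      ‖iteratedFDeriv ℝ i U y - iteratedFDeriv ℝ i U x‖
        ≤ ((2 * c) ^ p / 2)
            * (1 + (U x) ^ (max (p - (i : ℝ) - 1) 0 / p)
                + ‖y - x‖ ^ (max (p - (i : ℝ) - 1) 0))
            * ‖y - x‖ :=
  iterated_deriv_difference_bound_general d p c hp hc i U hU hU0 hder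
end
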